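/- Let G be a finite simple graph with 11 vertices, 21 edges, and minimum degree at least 3, and suppose that for every pair of distinct vertices a, b the induced subgraph G−a,b has at least 12 edges. Then the multiset of vertex degrees of G is one of (6,4^6,3^4), (5^4,4,3^6), (5^3,4^3,3^5), (5^2,4^5,3^4), (5,4^7,3^3), or (4^9,3^2). -/

import Mathlib

/-!
Deleting two distinct vertices `a`, `b` removes `deg a + deg b` edges, minus one if `a ~ b`, so the
hypothesis on `G - a,b` gives `deg a + deg b ≤ 21 + 1 - 12 = 10` for every pair. Together with
degree sum `42`, eleven degrees `≥ 3` and this pairwise bound, a vertex of degree `7` would force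
all others to `3` (sum `37`), a vertex of degree `6` forces all others to be `≤ 4`, and the counting
equations for degrees in `{3, 4, 5}` leave exactly the six listed sequences.
-/

open scoped Classical
open Finset

namespace SimpleGraph
variable {V : Type*} [Fintype V] (G : SimpleGraph V)

theorem card_edgeFinset_induce_compl_pair_add_degree_add_degree_le {a b : V} (hab : a ≠ b) :
    #(G.induce ({a, b}ᶜ : Set V)).edgeFinset + G.degree a + G.degree b ≤ #G.edgeFinset + 1 := by
  have hkept := congrArg card (G.map_edgeFinset_induce (s := ({a, b}ᶜ : Set V)))
  rw [card_map] at hkept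
  have hdisj : Disjoint (G.edgeFinset ∩ ({a, b}ᶜ : Set V).toFinset.sym2)
      (G.incidenceFinset a ∪ G.incidenceFinset b) := by
    refine Finset.disjoint_left.mpr fun e he hinc => ?_
    simp only [mem_inter, mem_sym2_iff, Set.mem_toFinset] at he
    rcases mem_union.mp hinc with h | h
    · exact he.2 a ((G.mem_incidenceFinset _ _).mp h).2 (by simp)
    · exact he.2 b ((G.mem_incidenceFinset _ _).mp h).2 (by simp)
  have hunion : #(G.edgeFinset ∩ ({a, b}ᶜ : Set V).toFinset.sym2)
      + #(G.incidenceFinset a ∪ G.incidenceFinset b) ≤ #G.edgeFinset := by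
    rw [← card_union_of_disjoint hdisj]
    exact card_le_card (union_subset inter_subset_left
      (union_subset (G.incidenceFinset_subset a) (G.incidenceFinset_subset b)))
  have hinter : #(G.incidenceFinset a ∩ G.incidenceFinset b) ≤ 1 := by
    refine card_le_one.mpr fun e he e' he' => ?_
    have hsub := G.incidenceSet_inter_incidenceSet_subset hab
    simp only [mem_inter, mem_incidenceFinset] at he he'
    rw [Set.mem_singleton_iff.mp (hsub he), Set.mem_singleton_iff.mp (hsub he')]
  have hdeg := card_union_add_card_inter (G.incidenceFinset a) (G.incidenceFinset b)
  rw [card_incidenceFinset_eq_degree, card_incidenceFinset_eq_degree] at hdeg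
  omega

end SimpleGraph

theorem Finset.exists_ne_of_pair_le_map {α β : Type*} {s : Finset α} {f : α → β} {x y : β}
    (h : {x, y} ≤ s.val.map f) : ∃ a ∈ s, ∃ b ∈ s, a ≠ b ∧ f a = x ∧ f b = y := by
  obtain ⟨u, hu⟩ := Multiset.le_iff_exists_add.mp h
  rw [Multiset.insert_eq_cons, Multiset.cons_add, Multiset.singleton_add,
    ← Multiset.map_eq_cons] at hu
  obtain ⟨a, ha, hfa, hu⟩ := hu
  obtain ⟨b, hb, hfb, -⟩ := (Multiset.map_eq_cons _ _ _ _).mpr hu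
  exact ⟨a, ha, b, Multiset.mem_of_mem_erase hb,
    fun hab => s.nodup.notMem_erase (hab ▸ hb), hfa, hfb⟩

namespace Multiset
variable {α : Type*} [DecidableEq α]

theorem eq_sum_replicate_count {s : Multiset α} {t : Finset α} (h : ∀ x ∈ s, x ∈ t) :
    s = ∑ d ∈ t, replicate (s.count d) d := by
  ext a
  simp only [count_sum', count_replicate, Finset.sum_ite_eq']
  split_ifs with ha
  · rfl
  · exact count_eq_zero.mpr fun has => ha (h a has)

theorem pair_le_of_mem {s : Multiset α} {x y : α} (hx : x ∈ s) (hy : y ∈ s)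
    (hxy : x = y → 2 ≤ s.count x) : {x, y} ≤ s := by
  by_cases h : x = y
  · subst h
    exact le_count_iff_replicate_le.mp (hxy rfl)
  · exact (le_iff_subset (by simp [h])).mpr (by simp [hx, hy])

theorem add_le_of_pair_sum_le {s : Multiset ℕ} {m k : ℕ} (hcard : 1 < card s)
    (hmin : ∀ y ∈ s, m ≤ y) (hpair : ∀ x y, {x, y} ≤ s → x + y ≤ k) :
    ∀ x ∈ s, x + m ≤ k := by
  intro x hx
  have hrest : 0 < card (s.erase x) := by have := card_erase_add_one hx; omega
  obtain ⟨y, hy⟩ := card_pos_iff_exists_mem.mp hrest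
  have hxy : {x, y} ≤ s := cons_erase hx ▸ cons_le_cons x (singleton_le.mpr hy)
  have := hpair x y hxy
  have := hmin y (mem_of_mem_erase hy)
  omega

theorem six_cases_of_pair_sum_le_ten {s : Multiset ℕ} (hcard : card s = 11) (hsum : s.sum = 42)
    (hmin : ∀ x ∈ s, 3 ≤ x) (hpair : ∀ x y, {x, y} ≤ s → x + y ≤ 10) :
    s = ↑[3, 3, 3, 3, 4, 4, 4, 4, 4, 4, 6] ∨ s = ↑[3, 3, 3, 3, 3, 3, 4, 5, 5, 5, 5] ∨
      s = ↑[3, 3, 3, 3, 3, 4, 4, 4, 5, 5, 5] ∨ s = ↑[3, 3, 3, 3, 4, 4, 4, 4, 4, 5, 5] ∨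
      s = ↑[3, 3, 3, 4, 4, 4, 4, 4, 4, 4, 5] ∨ s = ↑[3, 3, 4, 4, 4, 4, 4, 4, 4, 4, 4] := by
  have hs : s = replicate (s.count 3) 3 + replicate (s.count 4) 4 + replicate (s.count 5) 5
      + replicate (s.count 6) 6 + replicate (s.count 7) 7 := by
    have hmax := add_le_of_pair_sum_le (by omega) hmin hpair
    simpa [Finset.sum_Icc_succ_top] using
      eq_sum_replicate_count (t := Finset.Icc 3 7) fun x hx =>
        Finset.mem_Icc.mpr ⟨hmin x hx, by have := hmax x hx; omega⟩
  have hcount : ∀ d e, 0 < s.count d → 0 < s.count e → (d = e → 2 ≤ s.count d) → d + e ≤ 10 :=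
    fun d e hd he hde => hpair d e (pair_le_of_mem (count_pos.mp hd) (count_pos.mp he) hde)
  -- the pairs of values in `[3, 7]` whose sum exceeds `10`
  have := hcount 7 7; have := hcount 4 7; have := hcount 5 7; have := hcount 6 7
  have := hcount 6 6; have := hcount 5 6
  rw [hs] at hcard hsum ⊢
  simp only [card_add, card_replicate, sum_add, sum_replicate, smul_eq_mul] at hcard hsum
  generalize s.count 3 = n₃, s.count 4 = n₄, s.count 5 = n₅, s.count 6 = n₆, s.count 7 = n₇ at *
  obtain rfl : n₇ = 0 := by omega
  obtain rfl : n₄ = 9 - 2 * n₅ - 3 * n₆ := by omega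
  obtain rfl : n₃ = 2 + n₅ + 2 * n₆ := by omega
  have : n₆ ≤ 1 := by omega
  have : n₅ ≤ 4 := by omega
  interval_cases n₅ <;> interval_cases n₆ <;> first | omega | decide

end Multiset

/-- Let G be a finite simple graph with 11 vertices, 21 edges, and
minimum degree at least 3, such that for every pair of distinct vertices a, b
the induced subgraph G−a,b has at least 12 edges. Then the degree multiset of G
is one of (6,4^6,3^4), (5^4,4,3^6), (5^3,4^3,3^5), (5^2,4^5,3^4), (5,4^7,3^3),
or (4^9,3^2). -/
theorem stmt_10 {V : Type*} [Fintype V] (G : SimpleGraph V)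
    (hV : Fintype.card V = 11) (hE : G.edgeFinset.card = 21)
    (hmin : ∀ v : V, 3 ≤ G.degree v)
    (hdel : ∀ a b : V, a ≠ b →
      12 ≤ (G.induce ({a, b}ᶜ : Set V)).edgeFinset.card) :
    (Finset.univ : Finset V).val.map (fun v => G.degree v) =
        (↑[3, 3, 3, 3, 4, 4, 4, 4, 4, 4, 6] : Multiset ℕ) ∨
    (Finset.univ : Finset V).val.map (fun v => G.degree v) =
        (↑[3, 3, 3, 3, 3, 3, 4, 5, 5, 5, 5] : Multiset ℕ) ∨
    (Finset.univ : Finset V).val.map (fun v => G.degree v) =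
        (↑[3, 3, 3, 3, 3, 4, 4, 4, 5, 5, 5] : Multiset ℕ) ∨
    (Finset.univ : Finset V).val.map (fun v => G.degree v) =
        (↑[3, 3, 3, 3, 4, 4, 4, 4, 4, 5, 5] : Multiset ℕ) ∨
    (Finset.univ : Finset V).val.map (fun v => G.degree v) =
        (↑[3, 3, 3, 4, 4, 4, 4, 4, 4, 4, 5] : Multiset ℕ) ∨
    (Finset.univ : Finset V).val.map (fun v => G.degree v) =
        (↑[3, 3, 4, 4, 4, 4, 4, 4, 4, 4, 4] : Multiset ℕ) := by
  have hpair : ∀ a b : V, a ≠ b → G.degree a + G.degree b ≤ 10 := fun a b hab => by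
    have := G.card_edgeFinset_induce_compl_pair_add_degree_add_degree_le hab
    have := hdel a b hab
    omega
  apply Multiset.six_cases_of_pair_sum_le_ten
  · simp [hV]
  · exact G.sum_degrees_eq_twice_card_edges.trans (by rw [hE])
  · simpa using hmin
  · intro x y hxy
    obtain ⟨a, -, b, -, hab, rfl, rfl⟩ := Finset.exists_ne_of_pair_le_map hxy
    exact hpair a b hab
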